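/- In the two-player interconnected contest with Tullock contest success function with parameter γ ∈ (0,1], suppose m ≥ 2, c_1 > 0, c_2 > 0, and v^k = v > 0 for all k ∈ B. For every ε > 0 there exists λ_ε > 0 such that, when ρ_1 is the empty network (ρ_1^{l,k} = 0 for all l ≠ k) and ρ_2 is the complete directed network with ρ_2^{l,k} = λ_ε for all l ≠ k, in every Nash equilibrium of the resulting game the total effort of each player i ∈ {1,2} satisfies Σ_{k∈B} e_i^k < ε. -/

import Mathlib

open Finset Matrix

/-- Effective effort of a player with spillover matrix `ρ` and effort vector `e`
at battlefield `k`: `y^k = e^k + ∑_{l ≠ k} ρ^{l,k} e^l`. -/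
noncomputable def effY {m : ℕ} (ρ : Matrix (Fin m) (Fin m) ℝ) (e : Fin m → ℝ)
    (k : Fin m) : ℝ :=
  e k + ∑ l ∈ Finset.univ.erase k, ρ l k * e l

/-- Tullock contest success function with parameter `γ`.  When both effective
efforts are `0` this gives `0/0 = 0`, matching the convention. -/
noncomputable def tullock (γ y₁ y₂ : ℝ) : ℝ :=
  y₁ ^ γ / (y₁ ^ γ + y₂ ^ γ)

/-- Payoff of player `i` in the interconnected contest. -/
noncomputable def payoff {m : ℕ} (γ : ℝ) (v : Fin m → ℝ) (c : Fin 2 → ℝ)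
    (ρ : Fin 2 → Matrix (Fin m) (Fin m) ℝ) (e : Fin 2 → Fin m → ℝ) (i : Fin 2) : ℝ :=
  (∑ k, v k * tullock γ (effY (ρ i) (e i) k) (effY (ρ (1 - i)) (e (1 - i)) k))
    - c i * ∑ k, e i k

/-- Pure strategy Nash equilibrium of the interconnected contest:
nonnegative efforts, and no profitable deviation to any nonnegative effort vector. -/
def IsNashEq {m : ℕ} (γ : ℝ) (v : Fin m → ℝ) (c : Fin 2 → ℝ)
    (ρ : Fin 2 → Matrix (Fin m) (Fin m) ℝ) (e : Fin 2 → Fin m → ℝ) : Prop :=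
  (∀ i k, 0 ≤ e i k) ∧
  ∀ (i : Fin 2) (e' : Fin m → ℝ), (∀ k, 0 ≤ e' k) →
    payoff γ v c ρ (Function.update e i e') i ≤ payoff γ v c ρ e i

/-- Winning probability of player `i` at battlefield `k` under profile `e`. -/
noncomputable def eqProb {m : ℕ} (γ : ℝ) (ρ : Fin 2 → Matrix (Fin m) (Fin m) ℝ)
    (e : Fin 2 → Fin m → ℝ) (i : Fin 2) (k : Fin m) : ℝ :=
  tullock γ (effY (ρ i) (e i) k) (effY (ρ (1 - i)) (e (1 - i)) k)


/-! Staying out guarantees player 1 a payoff of `0`, so `c₁ ∑ e₁ ≤ ∑ v p₁ ≤ m v`; in particular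
every `e₁ᵏ ≤ m v / c₁`. Player 2 may deviate to spreading `s` on every battlefield: through the
complete network each battlefield then receives effective effort at least `λ m s / 2`, so the
deviation wins battlefield `k` with probability at least `1 - (e₁ᵏ / (λ m s / 2))^γ`. Since the
two winning probabilities at a battlefield add up to at most `1`, adding the two equilibrium
conditions bounds the total cost `c₁ ∑ e₁ + c₂ ∑ e₂` by the deviation's expected loss plus its
cost `c₂ m s`, and the loss vanishes as `λ → ∞`. -/

open Filter Topology

section Tullock

variable {γ y₁ y₂ : ℝ}

lemma tullock_le_one (h₁ : 0 ≤ y₁) (h₂ : 0 ≤ y₂) : tullock γ y₁ y₂ ≤ 1 :=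
  div_le_one_of_le₀ (le_add_of_nonneg_right (Real.rpow_nonneg h₂ _))
    (add_nonneg (Real.rpow_nonneg h₁ _) (Real.rpow_nonneg h₂ _))

lemma tullock_zero_left (hγ : γ ≠ 0) (y : ℝ) : tullock γ 0 y = 0 := by
  simp [tullock, Real.zero_rpow hγ]

lemma tullock_add_tullock_swap_le_one : tullock γ y₁ y₂ + tullock γ y₂ y₁ ≤ 1 := by
  rw [tullock, tullock, add_comm (y₂ ^ γ) (y₁ ^ γ), ← add_div]
  exact div_self_le_one _

lemma one_sub_rpow_div_le_tullock {x y z : ℝ} (hγ : 0 ≤ γ) (hx : 0 ≤ x) (hz : 0 < z)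
    (hzy : z ≤ y) : 1 - (x / z) ^ γ ≤ tullock γ y x := by
  have hyγ : 0 < y ^ γ := Real.rpow_pos_of_pos (hz.trans_le hzy) γ
  have hxγ : 0 ≤ x ^ γ := Real.rpow_nonneg hx γ
  have hzγ : z ^ γ ≤ y ^ γ + x ^ γ :=
    le_add_of_le_of_nonneg (Real.rpow_le_rpow hz.le hzy hγ) hxγ
  have hsplit : tullock γ y x = 1 - x ^ γ / (y ^ γ + x ^ γ) := by
    rw [tullock]; field_simp; ring
  rw [hsplit, Real.div_rpow hx hz.le]
  gcongr

end Tullock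

section EffectiveEffort

variable {m : ℕ}

lemma effY_nonneg {ρ : Matrix (Fin m) (Fin m) ℝ} {e : Fin m → ℝ} (hρ : ∀ l k, 0 ≤ ρ l k)
    (he : ∀ k, 0 ≤ e k) (k : Fin m) : 0 ≤ effY ρ e k :=
  add_nonneg (he k) (sum_nonneg fun l _ => mul_nonneg (hρ l k) (he l))

@[simp]
lemma effY_zero_matrix (e : Fin m → ℝ) (k : Fin m) : effY 0 e k = e k := by
  simp [effY]

@[simp]
lemma effY_zero_effort (ρ : Matrix (Fin m) (Fin m) ℝ) (k : Fin m) : effY ρ 0 k = 0 := by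
  simp [effY]

lemma effY_const_of_complete {ρ : Matrix (Fin m) (Fin m) ℝ} {lam : ℝ}
    (hρ : ∀ l k, ρ l k = if l = k then 0 else lam) (s : ℝ) (k : Fin m) :
    effY ρ (fun _ => s) k = s + ((m : ℝ) - 1) * (lam * s) := by
  have hoff : ∀ l ∈ univ.erase k, ρ l k * s = lam * s := fun l hl => by
    rw [hρ, if_neg (mem_erase.mp hl).1]
  rw [effY, sum_congr rfl hoff, sum_const, card_erase_of_mem (mem_univ k), card_univ,
    Fintype.card_fin, nsmul_eq_mul, Nat.cast_sub (Nat.one_le_of_lt k.isLt), Nat.cast_one]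

lemma mul_half_le_effY_const_of_complete {ρ : Matrix (Fin m) (Fin m) ℝ} {lam s : ℝ}
    (hm : 2 ≤ m) (hlam : 0 ≤ lam) (hs : 0 ≤ s) (hρ : ∀ l k, ρ l k = if l = k then 0 else lam)
    (k : Fin m) : lam * (m * s / 2) ≤ effY ρ (fun _ => s) k := by
  have hm' : (2 : ℝ) ≤ m := by exact_mod_cast hm
  rw [effY_const_of_complete hρ]
  nlinarith [mul_nonneg hlam hs]

end EffectiveEffort

section Game

variable {m : ℕ} {γ : ℝ} {v : Fin m → ℝ} {c : Fin 2 → ℝ} {ρ : Fin 2 → Matrix (Fin m) (Fin m) ℝ}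
  {e : Fin 2 → Fin m → ℝ}

lemma payoff_eq_sum_eqProb (i : Fin 2) :
    payoff γ v c ρ e i = ∑ k, v k * eqProb γ ρ e i k - c i * ∑ k, e i k :=
  rfl

lemma payoff_update_zero (hγ : γ ≠ 0) (i : Fin 2) :
    payoff γ v c ρ (Function.update e i 0) i = 0 := by
  simp [payoff, tullock_zero_left hγ]

lemma eqProb_add_eqProb_sub_le_one (i : Fin 2) (k : Fin m) :
    eqProb γ ρ e i k + eqProb γ ρ e (1 - i) k ≤ 1 := by
  simpa only [eqProb, sub_sub_cancel] using tullock_add_tullock_swap_le_one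

lemma eqProb_le_one (hρ : ∀ j l k, 0 ≤ ρ j l k) (he : ∀ j k, 0 ≤ e j k) (i : Fin 2) (k : Fin m) :
    eqProb γ ρ e i k ≤ 1 :=
  tullock_le_one (effY_nonneg (hρ i) (he i) k) (effY_nonneg (hρ _) (he _) k)

namespace IsNashEq

lemma cost_le_sum_eqProb (he : IsNashEq γ v c ρ e) (hγ : γ ≠ 0) (i : Fin 2) :
    c i * ∑ k, e i k ≤ ∑ k, v k * eqProb γ ρ e i k := by
  have hstay := he.2 i 0 fun _ => le_rfl
  rw [payoff_update_zero hγ, payoff_eq_sum_eqProb] at hstay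
  linarith

lemma cost_le_sum_values (he : IsNashEq γ v c ρ e) (hγ : γ ≠ 0) (hv : ∀ k, 0 ≤ v k)
    (hρ : ∀ j l k, 0 ≤ ρ j l k) (i : Fin 2) : c i * ∑ k, e i k ≤ ∑ k, v k :=
  (he.cost_le_sum_eqProb hγ i).trans <| sum_le_sum fun k _ =>
    mul_le_of_le_one_right (hv k) (eqProb_le_one hρ he.1 i k)

lemma cost_add_cost_le (he : IsNashEq γ v c ρ e) (hγ : γ ≠ 0) (hv : ∀ k, 0 ≤ v k) (i : Fin 2)
    {e' : Fin m → ℝ} (he' : ∀ k, 0 ≤ e' k) :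
    c i * ∑ k, e i k + c (1 - i) * ∑ k, e (1 - i) k ≤
      ∑ k, v k * (1 - tullock γ (effY (ρ i) e' k) (effY (ρ (1 - i)) (e (1 - i)) k)) +
        c i * ∑ k, e' k := by
  have hne : 1 - i ≠ i := by fin_cases i <;> decide
  have hdev := he.2 i e' he'
  simp only [payoff, Function.update_self, Function.update_of_ne hne] at hdev
  have hprob : ∑ k, v k * eqProb γ ρ e i k + ∑ k, v k * eqProb γ ρ e (1 - i) k ≤ ∑ k, v k := by
    rw [← sum_add_distrib]
    exact sum_le_sum fun k _ => by
      rw [← mul_add]; exact mul_le_of_le_one_right (hv k) (eqProb_add_eqProb_sub_le_one i k)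
  have hopp := he.cost_le_sum_eqProb hγ (1 - i)
  simp only [mul_sub, mul_one, sum_sub_distrib]
  simp only [eqProb] at hprob hopp ⊢
  linarith

end IsNashEq

end Game

lemma tendsto_div_mul_rpow_atTop {γ a b : ℝ} (hγ : 0 < γ) (hb : 0 < b) :
    Tendsto (fun x => (a / (x * b)) ^ γ) atTop (𝓝 0) := by
  have hratio : Tendsto (fun x => a / (x * b)) atTop (𝓝 0) :=
    tendsto_const_nhds.div_atTop (tendsto_id.atTop_mul_const hb)
  have hpow := (Real.continuousAt_rpow_const 0 γ (Or.inr hγ.le)).tendsto.comp hratio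
  rwa [Real.zero_rpow hγ.ne'] at hpow

lemma IsNashEq.cost_add_cost_le_of_empty_complete {m : ℕ} {γ v lam s : ℝ} {c : Fin 2 → ℝ}
    {ρ : Fin 2 → Matrix (Fin m) (Fin m) ℝ} {e : Fin 2 → Fin m → ℝ} (hm : 2 ≤ m) (hγ : 0 < γ)
    (hv : 0 ≤ v) (hc : 0 < c 0) (hlam : 0 < lam) (hs : 0 < s) (hρ0 : ρ 0 = 0)
    (hρ1 : ∀ l k, ρ 1 l k = if l = k then 0 else lam) (he : IsNashEq γ (fun _ => v) c ρ e) :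
    c 0 * ∑ k, e 0 k + c 1 * ∑ k, e 1 k ≤
      m * v * (m * v / c 0 / (lam * (m * s / 2))) ^ γ + c 1 * (m * s) := by
  have hρ : ∀ j l k, 0 ≤ ρ j l k := by
    intro j l k
    fin_cases j
    · simp [hρ0]
    · simp only [Fin.mk_one, hρ1]; split_ifs <;> positivity
  have hz : 0 < lam * (m * s / 2) := by
    have : (0 : ℝ) < m := by exact_mod_cast (by omega : 0 < m)
    positivity
  have hsmall : ∀ k, e 0 k ≤ m * v / c 0 := fun k => by
    rw [le_div_iff₀ hc, mul_comm]
    calc c 0 * e 0 k ≤ c 0 * ∑ l, e 0 l :=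
          mul_le_mul_of_nonneg_left (single_le_sum (fun l _ => he.1 0 l) (mem_univ k)) hc.le
      _ ≤ ∑ _l : Fin m, v := he.cost_le_sum_values hγ.ne' (fun _ => hv) hρ 0
      _ = m * v := by simp
  have hloss : ∀ k, 1 - tullock γ (effY (ρ 1) (fun _ => s) k) (e 0 k) ≤
      (m * v / c 0 / (lam * (m * s / 2))) ^ γ := fun k => by
    have hwin := one_sub_rpow_div_le_tullock hγ.le (he.1 0 k) hz
      (mul_half_le_effY_const_of_complete hm hlam.le hs.le hρ1 k)
    have hratio : (e 0 k / (lam * (m * s / 2))) ^ γ ≤ (m * v / c 0 / (lam * (m * s / 2))) ^ γ :=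
      Real.rpow_le_rpow (div_nonneg (he.1 0 k) hz.le)
        (div_le_div_of_nonneg_right (hsmall k) hz.le) hγ.le
    linarith
  calc c 0 * ∑ k, e 0 k + c 1 * ∑ k, e 1 k
      = c 1 * ∑ k, e 1 k + c (1 - 1) * ∑ k, e (1 - 1) k := by simp [add_comm]
    _ ≤ ∑ k, v * (1 - tullock γ (effY (ρ 1) (fun _ => s) k) (e 0 k)) + c 1 * (m * s) := by
        simpa [hρ0] using he.cost_add_cost_le hγ.ne' (fun _ => hv) 1 fun _ => hs.le
    _ ≤ ∑ _k : Fin m, v * (m * v / c 0 / (lam * (m * s / 2))) ^ γ + c 1 * (m * s) := by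
        gcongr with k _
        exact hloss k
    _ = m * v * (m * v / c 0 / (lam * (m * s / 2))) ^ γ + c 1 * (m * s) := by
        simp [mul_assoc]

theorem welfare_design_small_efforts_general
    (m : ℕ) (hm : 2 ≤ m) (γ : ℝ) (hγ0 : 0 < γ)
    (v : ℝ) (hv : 0 < v)
    (c : Fin 2 → ℝ) (hc : ∀ i, 0 < c i) :
    ∀ ε > (0 : ℝ), ∃ lam > (0 : ℝ),
      ∀ ρ : Fin 2 → Matrix (Fin m) (Fin m) ℝ,
        ρ 0 = 0 →
        (∀ l k, ρ 1 l k = if l = k then 0 else lam) →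
        ∀ e : Fin 2 → Fin m → ℝ, IsNashEq γ (fun _ => v) c ρ e →
        ∀ i : Fin 2, ∑ k, e i k < ε := by
  intro ε hε
  set μ := min (c 0) (c 1)
  have hμ : 0 < μ := lt_min (hc 0) (hc 1)
  have hm0 : (0 : ℝ) < m := by exact_mod_cast (by omega : 0 < m)
  set s := μ * ε / (2 * c 1 * m)
  have hs : 0 < s := by have := hc 1; positivity
  have hcost : c 1 * (m * s) < μ * ε := by
    have : c 1 * (m * s) = μ * ε / 2 := by simp only [s]; field_simp [(hc 1).ne']
    rw [this]; linarith [mul_pos hμ hε]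
  have hlim : Tendsto (fun lam => m * v * (m * v / c 0 / (lam * (m * s / 2))) ^ γ + c 1 * (m * s))
      atTop (𝓝 (c 1 * (m * s))) := by
    simpa using ((tendsto_div_mul_rpow_atTop hγ0 (by positivity)).const_mul (m * v)).add_const
      (c 1 * (m * s))
  obtain ⟨lam, hlam, hlam_pos⟩ :=
    ((hlim.eventually (gt_mem_nhds hcost)).and (eventually_gt_atTop 0)).exists
  refine ⟨lam, hlam_pos, fun ρ hρ0 hρ1 e he => ?_⟩
  have htotal := he.cost_add_cost_le_of_empty_complete hm hγ0 hv.le (hc 0) hlam_pos hs hρ0 hρ1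
  have hA := sum_nonneg fun k (_ : k ∈ univ) => he.1 0 k
  have hB := sum_nonneg fun k (_ : k ∈ univ) => he.1 1 k
  have hμ_le : ∀ i, μ * ∑ k, e i k ≤ c 0 * ∑ k, e 0 k + c 1 * ∑ k, e 1 k :=
    Fin.forall_fin_two.2
      ⟨by nlinarith [min_le_left (c 0) (c 1), hc 1], by nlinarith [min_le_right (c 0) (c 1), hc 0]⟩
  exact fun i => lt_of_mul_lt_mul_left ((hμ_le i).trans_lt (htotal.trans_lt hlam)) hμ.le

/-- welfare-maximizing design: with an empty network for player 1
and a complete network with large enough spillover λ for player 2, equilibrium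
total efforts can be made arbitrarily small. -/
theorem welfare_design_small_efforts
    (m : ℕ) (hm : 2 ≤ m) (γ : ℝ) (hγ0 : 0 < γ) (hγ1 : γ ≤ 1)
    (v : ℝ) (hv : 0 < v)
    (c : Fin 2 → ℝ) (hc : ∀ i, 0 < c i) :
    ∀ ε > (0 : ℝ), ∃ lam > (0 : ℝ),
      ∀ ρ : Fin 2 → Matrix (Fin m) (Fin m) ℝ,
        ρ 0 = 0 →
        (∀ l k, ρ 1 l k = if l = k then 0 else lam) →
        ∀ e : Fin 2 → Fin m → ℝ, IsNashEq γ (fun _ => v) c ρ e →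
        ∀ i : Fin 2, ∑ k, e i k < ε :=
  welfare_design_small_efforts_general m hm γ hγ0 v hv c hc
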